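/- Let X ⊆ ℤ^n, 1 ≤ u ≤ n, and let f : X → X be c_u-continuous. Suppose x, x′ ∈ X satisfy f(x) = x and f(x′) = x′, and suppose there is a unique c_u-path P in X from x to x′ of minimal length (i.e., exactly one c_u-path from x to x′ whose length equals the minimum length of such paths). Then f(p) = p for every point p of P. -/
import Mathlib


/-- Two points of `ℤⁿ` are `c_u`-adjacent: they are distinct, differ by at most 1 in each
coordinate, and differ in at most `u` coordinates. -/
def adjN (n u : ℕ) (x y : Fin n → ℤ) : Prop :=
  x ≠ y ∧ (∀ i, |x i - y i| ≤ 1) ∧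
    (Finset.univ.filter fun i => x i ≠ y i).card ≤ u

/-- `f` is `c_u`-continuous on `X ⊆ ℤⁿ`. -/
def DigContinuousN (n u : ℕ) (X : Set (Fin n → ℤ)) (f : (Fin n → ℤ) → Fin n → ℤ) : Prop :=
  ∀ x ∈ X, ∀ y ∈ X, adjN n u x y → f x = f y ∨ adjN n u (f x) (f y)

/-- `A` is a freezing set for `(X, c_u)`: every `c_u`-continuous self-map of `X`
fixing `A` pointwise is the identity on `X`. -/
def FreezingSetN (n u : ℕ) (X A : Set (Fin n → ℤ)) : Prop :=
  A ⊆ X ∧ ∀ f : (Fin n → ℤ) → Fin n → ℤ, Set.MapsTo f X X → DigContinuousN n u X f →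
    (∀ a ∈ A, f a = a) → ∀ x ∈ X, f x = x

/-- `A` is a minimal freezing set for `(X, c_u)`. -/
def MinFreezingSetN (n u : ℕ) (X A : Set (Fin n → ℤ)) : Prop :=
  FreezingSetN n u X A ∧ ∀ A' ⊂ A, ¬ FreezingSetN n u X A'

/-- `q` is a close `c_u`-neighbor of `p` in `X`. -/
def CloseNbrN (n u : ℕ) (X : Set (Fin n → ℤ)) (p q : Fin n → ℤ) : Prop :=
  p ∈ X ∧ q ∈ X ∧ p ≠ q ∧ ∀ x ∈ X, adjN n u x p → x = q ∨ adjN n u x q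

/-- A `c_u`-path of length `k` in `Y` from `a` to `b`. -/
def IsPathInN (n u : ℕ) (Y : Set (Fin n → ℤ)) (k : ℕ) (s : Fin (k + 1) → Fin n → ℤ)
    (a b : Fin n → ℤ) : Prop :=
  (∀ i, s i ∈ Y) ∧ s 0 = a ∧ s (Fin.last k) = b ∧
    ∀ i : Fin k, s i.castSucc = s i.succ ∨ adjN n u (s i.castSucc) (s i.succ)

/-- If `f : X → X` is `c_u`-continuous, `x, x' ∈ X` are fixed points of `f`, and `s` is
the unique `c_u`-path in `X` from `x` to `x'` of minimal length, then every point of `s`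
is a fixed point of `f`. -/
theorem unique_shortest_path_frozen (n u : ℕ) (hu1 : 1 ≤ u) (hun : u ≤ n)
    (X : Set (Fin n → ℤ)) (f : (Fin n → ℤ) → Fin n → ℤ)
    (hmaps : Set.MapsTo f X X) (hcont : DigContinuousN n u X f)
    (x x' : Fin n → ℤ) (hx : x ∈ X) (hx' : x' ∈ X) (hfx : f x = x) (hfx' : f x' = x')
    (k : ℕ) (s : Fin (k + 1) → Fin n → ℤ) (hpath : IsPathInN n u X k s x x')
    (hmin : ∀ (k' : ℕ) (s' : Fin (k' + 1) → Fin n → ℤ), IsPathInN n u X k' s' x x' → k ≤ k')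
    (huniq : ∀ s' : Fin (k + 1) → Fin n → ℤ, IsPathInN n u X k s' x x' → s' = s) :
    ∀ i, f (s i) = s i := by
  obtain ⟨hmem, h0, hl, hadj⟩ := hpath
  have hpath' : IsPathInN n u X k (fun i => f (s i)) x x' := by
    refine ⟨fun i => hmaps (hmem i), by show f (s 0) = x; rw [h0, hfx],
      by show f (s (Fin.last k)) = x'; rw [hl, hfx'], fun i => ?_⟩
    rcases hadj i with h | h
    · left; show f (s i.castSucc) = f (s i.succ); rw [h]
    · exact hcont _ (hmem _) _ (hmem _) h
  have := huniq _ hpath'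
  intro i
  exact congrFun this i
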